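/- arXiv:2602.05631 — 3 statements merged into one kernel-verified Lean document; each statement's English description precedes it below -/
import Mathlib

section
/- Let M be positive semidefinite and Y ∈ ℝ^{n×p} be such that all eigenvalues of YᵀMY lie in [5/6, 7/6]. Then ‖Y − Y(YᵀMY)^{-1/2}‖_F ≤ (3/2)·‖Y‖_F·‖YᵀMY − I_p‖₂. -/
open Matrix

attribute [local instance] Matrix.frobeniusNormedAddCommGroup Matrix.frobeniusNormedSpace

/-- The spectral (operator 2-) norm of a real square matrix. -/
noncomputable def specNorm {p : ℕ} (A : Matrix (Fin p) (Fin p) ℝ) : ℝ :=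
  ‖(Matrix.toEuclideanCLM (𝕜 := ℝ) A : EuclideanSpace ℝ (Fin p) →L[ℝ] EuclideanSpace ℝ (Fin p))‖

/-- The positive semidefinite square root of a positive semidefinite matrix
(the definition `Matrix.PosSemidef.sqrt` of the older Mathlib, since removed). -/
noncomputable def Matrix.PosSemidef.sqrt {n : Type*} [Fintype n] [DecidableEq n] {𝕜 : Type*}
    [RCLike 𝕜] [PartialOrder 𝕜] [StarOrderedRing 𝕜] {A : Matrix n n 𝕜} (hA : A.PosSemidef) : Matrix n n 𝕜 :=
  hA.1.eigenvectorUnitary.1 * diagonal ((↑) ∘ (√·) ∘ hA.1.eigenvalues) *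
  (star hA.1.eigenvectorUnitary : Matrix n n 𝕜)

/-!
Diagonalize `S = YᵀMY = V Λ Vᵀ` with `V` orthogonal. Then `Y - Y S^{-1/2} = Y V diag(1 - λⱼ^{-1/2}) Vᵀ`,
and since the Frobenius norm is invariant under right multiplication by orthogonal matrices, its
norm is at most `‖Y‖_F · maxⱼ |1 - λⱼ^{-1/2}|`. For `λ ≥ 5/6` one has
`|1 - λ^{-1/2}| ≤ (3/2)|λ - 1|`, and `|λⱼ - 1| ≤ ‖S - I‖₂` because an eigenvector of `S` for `λⱼ`
is an eigenvector of `S - I` for `λⱼ - 1`.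
-/

namespace Matrix

section Orthogonal

variable {n K : Type*} [Fintype n] [DecidableEq n] [Field K] {V : Matrix n n K}

theorem one_sub_conj_diagonal (hV : V * Vᵀ = 1) (d : n → K) :
    1 - V * diagonal d * Vᵀ = V * diagonal (1 - d) * Vᵀ := by
  have h1d : diagonal (1 - d) = 1 - diagonal d := by rw [← diagonal_one, diagonal_sub]; rfl
  rw [h1d, Matrix.mul_sub, Matrix.sub_mul, Matrix.mul_one, hV]

theorem inv_conj_diagonal (hV : V * Vᵀ = 1) {d : n → K} (hd : ∀ j, d j ≠ 0) :
    (V * diagonal d * Vᵀ)⁻¹ = V * diagonal d⁻¹ * Vᵀ := by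
  have hdd : diagonal d * diagonal d⁻¹ = 1 := by
    rw [diagonal_mul_diagonal, ← diagonal_one]
    exact congrArg diagonal (funext fun j ↦ mul_inv_cancel₀ (hd j))
  refine inv_eq_right_inv ?_
  calc V * diagonal d * Vᵀ * (V * diagonal d⁻¹ * Vᵀ)
      = V * (diagonal d * (Vᵀ * V) * diagonal d⁻¹) * Vᵀ := by simp only [Matrix.mul_assoc]
    _ = 1 := by rw [mul_eq_one_comm.mp hV, Matrix.mul_one, hdd, Matrix.mul_one, hV]

end Orthogonal

section Frobenius

variable {m n : Type*} [Fintype m] [Fintype n]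

theorem frobenius_norm_sq_eq_sum (A : Matrix m n ℝ) : ‖A‖ ^ 2 = ∑ i, ∑ j, A i j ^ 2 := by
  rw [frobenius_norm_def, ← Real.rpow_two, ← Real.rpow_mul (by positivity)]
  norm_num

theorem frobenius_norm_sq_eq_trace (A : Matrix m n ℝ) : ‖A‖ ^ 2 = (A * Aᵀ).trace := by
  rw [frobenius_norm_sq_eq_sum]
  simp only [trace, diag, mul_apply, transpose_apply, sq]

theorem frobenius_norm_mul_of_mul_transpose_eq_one [DecidableEq n] (A : Matrix m n ℝ)
    {V : Matrix n n ℝ} (hV : V * Vᵀ = 1) : ‖A * V‖ = ‖A‖ := by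
  refine (pow_left_inj₀ (norm_nonneg _) (norm_nonneg _) two_ne_zero).mp ?_
  rw [frobenius_norm_sq_eq_trace, frobenius_norm_sq_eq_trace, transpose_mul, Matrix.mul_assoc,
    ← Matrix.mul_assoc V, hV, Matrix.one_mul]

theorem frobenius_norm_mul_diagonal_le [DecidableEq n] (A : Matrix m n ℝ) {c : n → ℝ} {B : ℝ}
    (hB : 0 ≤ B) (hc : ∀ j, |c j| ≤ B) : ‖A * diagonal c‖ ≤ B * ‖A‖ := by
  refine (pow_le_pow_iff_left₀ (norm_nonneg _) (by positivity) two_ne_zero).mp ?_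
  rw [mul_pow, frobenius_norm_sq_eq_sum, frobenius_norm_sq_eq_sum, Finset.mul_sum]
  refine Finset.sum_le_sum fun i _ ↦ ?_
  rw [Finset.mul_sum]
  refine Finset.sum_le_sum fun j _ ↦ ?_
  rw [mul_diagonal, mul_pow, mul_comm (B ^ 2)]
  exact mul_le_mul_of_nonneg_left (sq_le_sq' (abs_le.mp (hc j)).1 (abs_le.mp (hc j)).2)
    (sq_nonneg _)

theorem frobenius_norm_mul_conj_diagonal_le [DecidableEq n] (A : Matrix m n ℝ)
    {V : Matrix n n ℝ} (hV : V * Vᵀ = 1) {c : n → ℝ} {B : ℝ} (hB : 0 ≤ B)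
    (hc : ∀ j, |c j| ≤ B) : ‖A * (V * diagonal c * Vᵀ)‖ ≤ B * ‖A‖ := by
  have hVt : Vᵀ * Vᵀᵀ = 1 := by rw [transpose_transpose, mul_eq_one_comm.mp hV]
  calc ‖A * (V * diagonal c * Vᵀ)‖ = ‖A * V * diagonal c‖ := by
        rw [← frobenius_norm_mul_of_mul_transpose_eq_one (A * V * diagonal c) hVt]
        simp only [Matrix.mul_assoc]
    _ ≤ B * ‖A * V‖ := frobenius_norm_mul_diagonal_le _ hB hc
    _ = B * ‖A‖ := by rw [frobenius_norm_mul_of_mul_transpose_eq_one A hV]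

end Frobenius

theorem abs_le_specNorm_of_mulVec_eq_smul {p : ℕ} {B : Matrix (Fin p) (Fin p) ℝ}
    {v : Fin p → ℝ} (hv : v ≠ 0) {μ : ℝ} (h : B *ᵥ v = μ • v) : |μ| ≤ specNorm B := by
  have hv' : 0 < ‖WithLp.toLp 2 v‖ := norm_pos_iff.mpr (by simpa using hv)
  have := (toEuclideanCLM (𝕜 := ℝ) B).le_opNorm (WithLp.toLp 2 v)
  rw [toEuclideanCLM_toLp, h, WithLp.toLp_smul, norm_smul, Real.norm_eq_abs] at this
  exact le_of_mul_le_mul_right this hv'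

theorem IsHermitian.abs_eigenvalues_sub_le_specNorm {p : ℕ} {A : Matrix (Fin p) (Fin p) ℝ}
    (hA : A.IsHermitian) (c : ℝ) (i : Fin p) :
    |hA.eigenvalues i - c| ≤ specNorm (A - c • 1) := by
  refine abs_le_specNorm_of_mulVec_eq_smul (v := ⇑(hA.eigenvectorBasis i)) (fun h ↦ ?_) ?_
  · exact hA.eigenvectorBasis.orthonormal.ne_zero i (by ext j; exact congrFun h j)
  · rw [sub_mulVec, mulVec_eigenvectorBasis, smul_mulVec, one_mulVec, sub_smul]

end Matrix

/- With `s = √t`: `|1 - 1/s| = |s - 1| / s` and `|t - 1| = |s - 1| (s + 1)`, so the claim is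
`2 ≤ 3 s (s + 1)`, which holds once `s ≥ 9/10`. -/
theorem abs_one_sub_inv_sqrt_le {t : ℝ} (ht : 5 / 6 ≤ t) :
    |1 - (√t)⁻¹| ≤ 3 / 2 * |t - 1| := by
  have hs : 0 < √t := Real.sqrt_pos.mpr (by linarith)
  have hst : √t ^ 2 = t := Real.sq_sqrt (by linarith)
  have hlow : 9 / 10 ≤ √t := by nlinarith
  rw [show 1 - (√t)⁻¹ = (√t - 1) / √t by field_simp,
    show t - 1 = (√t - 1) * (√t + 1) by nlinarith, abs_div, abs_of_pos hs, abs_mul,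
    abs_of_pos (by linarith : 0 < √t + 1), div_le_iff₀ hs]
  nlinarith [abs_nonneg (√t - 1)]

theorem stmt_2_general {n p : ℕ} (M : Matrix (Fin n) (Fin n) ℝ)
    (Y : Matrix (Fin n) (Fin p) ℝ) (hS : (Yᵀ * M * Y).PosSemidef)
    (heig : ∀ i, hS.1.eigenvalues i ∈ Set.Icc (5 / 6 : ℝ) (7 / 6)) :
    ‖Y - Y * (hS.sqrt)⁻¹‖ ≤ (3 / 2) * ‖Y‖ * specNorm (Yᵀ * M * Y - 1) := by
  set V : Matrix (Fin p) (Fin p) ℝ := hS.1.eigenvectorUnitary.1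
  have hV : V * Vᵀ = 1 := by
    simpa [V, star_eq_conjTranspose] using Unitary.mul_star_self_of_mem hS.1.eigenvectorUnitary.2
  set d : Fin p → ℝ := fun j ↦ √(hS.1.eigenvalues j)
  have hsqrt : hS.sqrt = V * diagonal d * Vᵀ := rfl
  have hd : ∀ j, d j ≠ 0 := fun j ↦ (Real.sqrt_pos.mpr (by linarith [(heig j).1])).ne'
  have hdiff : Y - Y * hS.sqrt⁻¹ = Y * (V * diagonal (1 - d⁻¹) * Vᵀ) := by
    rw [hsqrt, inv_conj_diagonal hV hd, ← one_sub_conj_diagonal hV, Matrix.mul_sub, Matrix.mul_one]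
  have hbound : ∀ j, |(1 - d⁻¹) j| ≤ 3 / 2 * specNorm (Yᵀ * M * Y - 1) := by
    intro j
    refine (abs_one_sub_inv_sqrt_le (heig j).1).trans ?_
    gcongr
    simpa using hS.1.abs_eigenvalues_sub_le_specNorm 1 j
  rw [hdiff, mul_right_comm]
  exact frobenius_norm_mul_conj_diagonal_le Y hV (mul_nonneg (by norm_num) (norm_nonneg _)) hbound

/-- If `M` is PSD and all eigenvalues of `YᵀMY` lie in `[5/6, 7/6]`, then
`‖Y − Y(YᵀMY)^{-1/2}‖_F ≤ (3/2)‖Y‖_F ‖YᵀMY − I‖₂`. -/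
theorem stmt_2 {n p : ℕ} (M : Matrix (Fin n) (Fin n) ℝ) (hM : M.PosSemidef)
    (Y : Matrix (Fin n) (Fin p) ℝ) (hS : (Yᵀ * M * Y).PosSemidef)
    (heig : ∀ i, hS.1.eigenvalues i ∈ Set.Icc (5 / 6 : ℝ) (7 / 6)) :
    ‖Y - Y * (hS.sqrt)⁻¹‖ ≤ (3 / 2) * ‖Y‖ * specNorm (Yᵀ * M * Y - 1) :=
  stmt_2_general M Y hS heig
end

section
/- Let f : ℝ^{n×p} → ℝ be differentiable, M positive semidefinite, β > 0, G(X) := ∇f(X((3/2)I_p − (1/2)XᵀMX)), and let ∇h(X) = G(X)((3/2)I_p − (1/2)XᵀMX) − MX·Ψ(XᵀG(X)) + β·MX(XᵀMX − I_p). Then ⟨∇h(Y), Y(YᵀMY − I_p)⟩ = ⟨β·YᵀMY − (3/2)·Ψ(YᵀG(Y)), (YᵀMY − I_p)²⟩ for all Y ∈ ℝ^{n×p}. -/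
/-!
Put `S = YᵀMY`, symmetric since `M` is, and `T = S - 1`. Moving `Y` across the trace turns the
three terms of `⟨∇h(Y), YT⟩` into traces of `p × p` matrices which, apart from `YᵀG(Y)`, are
polynomials in `S`, hence commute and are symmetric. Against a symmetric matrix `YᵀG(Y)` may be
replaced by its symmetric part `Ψ`, and what remains is `T (3/2 - S/2) - S T = -(3/2) T²`.
-/

open Matrix

namespace Matrix

variable {m n K : Type*} [Fintype m] [Fintype n]

theorem trace_transpose_mul_of_isSymm [CommSemiring K] (A : Matrix n n K) {B : Matrix n n K}
    (hB : B.IsSymm) : (Aᵀ * B).trace = (A * B).trace := by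
  simpa [hB.eq] using trace_transpose_mul A B

theorem trace_transpose_mul_mul_mul [CommSemiring K] (G Y : Matrix m n K) (P Q : Matrix n n K) :
    ((G * P)ᵀ * (Y * Q)).trace = (Pᵀ * (Gᵀ * Y) * Q).trace := by
  simp only [transpose_mul, Matrix.mul_assoc]

variable [Field K] [CharZero K]

theorem trace_symmPart_mul_of_isSymm (A : Matrix n n K) {B : Matrix n n K} (hB : B.IsSymm) :
    (((1 / 2 : K) • (A + Aᵀ)) * B).trace = (A * B).trace := by
  rw [smul_mul, add_mul, trace_smul, trace_add, trace_transpose_mul_of_isSymm A hB, smul_eq_mul]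
  ring

variable [DecidableEq n]

theorem trace_sub_one_pairing_of_isSymm {S : Matrix n n K} (hS : S.IsSymm) (A : Matrix n n K)
    (β : K) :
    (((3 / 2 : K) • 1 - (1 / 2 : K) • S)ᵀ * Aᵀ * (S - 1)).trace
      - (((1 / 2 : K) • (A + Aᵀ))ᵀ * S * (S - 1)).trace
      + β * ((S - 1)ᵀ * S * (S - 1)).trace
      = ((β • S - (3 / 2 : K) • ((1 / 2 : K) • (A + Aᵀ)))ᵀ * (S - 1) ^ 2).trace := by
  set T := S - 1
  set C := (3 / 2 : K) • (1 : Matrix n n K) - (1 / 2 : K) • S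
  set Ψ := (1 / 2 : K) • (A + Aᵀ)
  have hT : T.IsSymm := hS.sub isSymm_one
  have hC : C.IsSymm := (isSymm_one.smul _).sub (hS.smul _)
  have hΨ : Ψ.IsSymm := (isSymm_add_transpose_self A).smul _
  have hTC : (T * C).IsSymm := by
    have hcomm : Commute T C := (((Commute.one_right S).smul_right _).sub_right
      ((Commute.refl S).smul_right _)).sub_left (Commute.one_left _)
    rw [IsSymm, transpose_mul, hC.eq, hT.eq, hcomm.eq]
  have hsq : T * C - S * T = -(3 / 2 : K) • T ^ 2 := by
    simp only [T, C, sq, sub_mul, mul_sub, mul_smul_comm, one_mul, mul_one]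
    module
  have hAΨ : (Aᵀ * (T * C)).trace = (Ψ * (T * C)).trace := by
    rw [trace_transpose_mul_of_isSymm A hTC, trace_symmPart_mul_of_isSymm A hTC]
  clear_value T C Ψ
  calc (Cᵀ * Aᵀ * T).trace - (Ψᵀ * S * T).trace + β * (Tᵀ * S * T).trace
      = (Ψ * (T * C)).trace - (Ψ * (S * T)).trace + β * (S * T ^ 2).trace := by
        rw [hC.eq, trace_mul_cycle, trace_mul_comm, hAΨ, hΨ.eq, Matrix.mul_assoc, hT.eq,
          trace_mul_cycle, trace_mul_comm (T * T) S, sq]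
    _ = (Ψ * (T * C - S * T)).trace + β * (S * T ^ 2).trace := by
        rw [mul_sub, trace_sub]
    _ = ((β • S - (3 / 2 : K) • Ψ)ᵀ * T ^ 2).trace := by
        rw [hsq, ((hS.smul β).sub (hΨ.smul _)).eq]
        simp only [sub_mul, mul_smul_comm, smul_mul, trace_sub, trace_smul, smul_eq_mul]
        ring

end Matrix

theorem stmt_8_general {n p : ℕ} (M : Matrix (Fin n) (Fin n) ℝ) (hM : M.PosSemidef)
    (β : ℝ)
    (G : Matrix (Fin n) (Fin p) ℝ → Matrix (Fin n) (Fin p) ℝ)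
    (gradh : Matrix (Fin n) (Fin p) ℝ → Matrix (Fin n) (Fin p) ℝ)
    (hgradh : ∀ X, gradh X =
      G X * ((3 / 2 : ℝ) • (1 : Matrix (Fin p) (Fin p) ℝ) - (1 / 2 : ℝ) • (Xᵀ * M * X))
      - M * X * ((1 / 2 : ℝ) • (Xᵀ * G X + (Xᵀ * G X)ᵀ))
      + β • (M * X * (Xᵀ * M * X - 1))) :
    ∀ Y : Matrix (Fin n) (Fin p) ℝ,
      ((gradh Y)ᵀ * (Y * (Yᵀ * M * Y - 1))).trace
        = ((β • (Yᵀ * M * Y)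
            - (3 / 2 : ℝ) • ((1 / 2 : ℝ) • (Yᵀ * G Y + (Yᵀ * G Y)ᵀ)))ᵀ
            * (Yᵀ * M * Y - 1) ^ 2).trace := by
  intro Y
  have hMt : Mᵀ = M := (isHermitian_iff_isSymm.mp hM.isHermitian).eq
  have hS : (Yᵀ * M * Y).IsSymm := by
    rw [IsSymm, transpose_mul, transpose_mul, hMt, transpose_transpose, Matrix.mul_assoc]
  have hMY : (M * Y)ᵀ * Y = Yᵀ * M * Y := by rw [transpose_mul, hMt]
  have hGY : (G Y)ᵀ * Y = (Yᵀ * G Y)ᵀ := by rw [transpose_mul, transpose_transpose]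
  rw [hgradh, transpose_add, transpose_sub, transpose_smul, Matrix.add_mul, Matrix.sub_mul,
    smul_mul, trace_add, trace_sub, trace_smul, smul_eq_mul, trace_transpose_mul_mul_mul,
    trace_transpose_mul_mul_mul, trace_transpose_mul_mul_mul, hMY, hGY]
  exact trace_sub_one_pairing_of_isSymm hS (Yᵀ * G Y) β

/-- For differentiable `f` with gradient `gf`, `G(X) := ∇f(X((3/2)I − (1/2)XᵀMX))` and
`∇h(X) = G(X)((3/2)I − (1/2)XᵀMX) − MX Ψ(XᵀG(X)) + β MX(XᵀMX − I)`, one has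
`⟨∇h(Y), Y(YᵀMY − I)⟩ = ⟨β YᵀMY − (3/2)Ψ(YᵀG(Y)), (YᵀMY − I)²⟩` for all `Y`. -/
theorem stmt_8 {n p : ℕ} (M : Matrix (Fin n) (Fin n) ℝ) (hM : M.PosSemidef)
    (β : ℝ) (hβ : 0 < β)
    (f : Matrix (Fin n) (Fin p) ℝ → ℝ) (hf : Differentiable ℝ f)
    (gf : Matrix (Fin n) (Fin p) ℝ → Matrix (Fin n) (Fin p) ℝ)
    (hgf : ∀ X H, fderiv ℝ f X H = ((gf X)ᵀ * H).trace)
    (G : Matrix (Fin n) (Fin p) ℝ → Matrix (Fin n) (Fin p) ℝ)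
    (hG : ∀ X, G X = gf (X * ((3 / 2 : ℝ) • (1 : Matrix (Fin p) (Fin p) ℝ)
        - (1 / 2 : ℝ) • (Xᵀ * M * X))))
    (gradh : Matrix (Fin n) (Fin p) ℝ → Matrix (Fin n) (Fin p) ℝ)
    (hgradh : ∀ X, gradh X =
      G X * ((3 / 2 : ℝ) • (1 : Matrix (Fin p) (Fin p) ℝ) - (1 / 2 : ℝ) • (Xᵀ * M * X))
      - M * X * ((1 / 2 : ℝ) • (Xᵀ * G X + (Xᵀ * G X)ᵀ))
      + β • (M * X * (Xᵀ * M * X - 1))) :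
    ∀ Y : Matrix (Fin n) (Fin p) ℝ,
      ((gradh Y)ᵀ * (Y * (Yᵀ * M * Y - 1))).trace
        = ((β • (Yᵀ * M * Y)
            - (3 / 2 : ℝ) • ((1 / 2 : ℝ) • (Yᵀ * G Y + (Yᵀ * G Y)ᵀ)))ᵀ
            * (Yᵀ * M * Y - 1) ^ 2).trace :=
  stmt_8_general M hM β G gradh hgradh
end

section
/- Let c(X) := ‖XᵀMX − I_p‖_F² for M positive semidefinite. Suppose X* ∈ ℝ^{n×p}, v is a unit eigenvector of (X*)ᵀMX* with eigenvalue λ := λ_min((X*)ᵀMX*), and D := X* v vᵀ. Then ⟨D, ∇²c(X*)[D]⟩ = 4λ(3λ − 1). -/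
/-!
Write `A = (X*)ᵀ M X*` and `P = v vᵀ`, so that `D = X* P`. Since `v` is a unit eigenvector of the
symmetric matrix `A`, `P` is an idempotent with trace `1` and `A P = P A = λ P`. Hence
`(X* + tD)ᵀ M (X* + tD) − I = (A − I) + λ(2t + t²) P`, and `c(X* + tD)` is a quartic polynomial in `t`
whose `t²` coefficient is `2λ(λ − 1) + 4λ²`; twice this is `4λ(3λ − 1)`.
-/

open Matrix

lemma iteratedDeriv_two_quartic_zero {𝕜 : Type*} [NontriviallyNormedField 𝕜] (a b c d e : 𝕜) :
    iteratedDeriv 2 (fun t : 𝕜 => a + b * t + c * t ^ 2 + d * t ^ 3 + e * t ^ 4) 0 = 2 * c := by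
  repeat rw [iteratedDeriv_fun_add (by fun_prop) (by fun_prop)]
  simp [iteratedDeriv_const_mul_field, iteratedDeriv_const, iteratedDeriv_succ, mul_comm]

section Algebra

variable {R : Type*} [CommRing R] {m n : Type*} [Fintype m] [Fintype n]

lemma vecMulVec_self_mul_self {v : n → R} (hv : v ⬝ᵥ v = 1) :
    vecMulVec v v * vecMulVec v v = vecMulVec v v := by
  rw [vecMulVec_mul_vecMulVec, hv, one_smul]

lemma mul_vecMulVec_self_of_mulVec_eq_smul {A : Matrix n n R} {v : n → R} {μ : R}
    (h : A *ᵥ v = μ • v) : A * vecMulVec v v = μ • vecMulVec v v := by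
  rw [mul_vecMulVec, h, smul_vecMulVec]

lemma vecMulVec_self_mul_of_mulVec_eq_smul {A : Matrix n n R} {v : n → R} {μ : R}
    (hA : Aᵀ = A) (h : A *ᵥ v = μ • v) : vecMulVec v v * A = μ • vecMulVec v v := by
  rw [vecMulVec_mul, ← mulVec_transpose, hA, h, vecMulVec_smul]

lemma trace_mul_self_add_smul (B P : Matrix n n R) (s : R) :
    ((B + s • P) * (B + s • P)).trace
      = (B * B).trace + 2 * s * (B * P).trace + s ^ 2 * (P * P).trace := by
  simp only [Matrix.add_mul, Matrix.mul_add, Matrix.smul_mul, Matrix.mul_smul, trace_add,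
    trace_smul, smul_eq_mul, trace_mul_comm P B]
  ring

lemma transpose_mul_mul_add_smul_mul_proj (M : Matrix m m R) (X : Matrix m n R)
    {P : Matrix n n R} {μ : R} (hPt : Pᵀ = P) (hPP : P * P = P)
    (hAP : Xᵀ * M * X * P = μ • P) (hPA : P * (Xᵀ * M * X) = μ • P) (t : R) :
    (X + t • (X * P))ᵀ * M * (X + t • (X * P)) = Xᵀ * M * X + (μ * (2 * t + t ^ 2)) • P := by
  have hPAP : P * (Xᵀ * M * X) * P = μ • P := by
    rw [hPA, Matrix.smul_mul, hPP]
  have expand : (X + t • (X * P))ᵀ * M * (X + t • (X * P))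
      = Xᵀ * M * X + t • (P * (Xᵀ * M * X)) + t • (Xᵀ * M * X * P)
        + (t * t) • (P * (Xᵀ * M * X) * P) := by
    simp only [transpose_add, transpose_smul, transpose_mul, hPt, Matrix.add_mul, Matrix.mul_add,
      Matrix.smul_mul, Matrix.mul_smul, Matrix.mul_assoc]
    module
  rw [expand, hPAP, hPA, hAP]
  module

end Algebra

theorem stmt_11_general {n p : ℕ} (M : Matrix (Fin n) (Fin n) ℝ)
    (X : Matrix (Fin n) (Fin p) ℝ) (hHerm : (Xᵀ * M * X).IsHermitian)
    (v : Fin p → ℝ) (lam : ℝ)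
    (hv : ∑ i, v i ^ 2 = 1)
    (heig : (Xᵀ * M * X) *ᵥ v = lam • v) :
    iteratedDeriv 2
      (fun t : ℝ =>
        (((X + t • (X * vecMulVec v v))ᵀ * M * (X + t • (X * vecMulVec v v)) - 1)
          * ((X + t • (X * vecMulVec v v))ᵀ * M * (X + t • (X * vecMulVec v v)) - 1)).trace)
      0 = 4 * lam * (3 * lam - 1) := by
  set A := Xᵀ * M * X
  set P := vecMulVec v v
  have hvv : v ⬝ᵥ v = 1 := by simpa [dotProduct, sq] using hv
  have hPP : P * P = P := vecMulVec_self_mul_self hvv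
  have hAP : A * P = lam • P := mul_vecMulVec_self_of_mulVec_eq_smul heig
  have hPA : P * A = lam • P := vecMulVec_self_mul_of_mulVec_eq_smul hHerm heig
  have htrP : P.trace = 1 := by rw [trace_vecMulVec, hvv]
  have htrBP : ((A - 1) * P).trace = lam - 1 := by
    rw [Matrix.sub_mul, Matrix.one_mul, hAP, trace_sub, trace_smul, htrP, smul_eq_mul, mul_one]
  have quartic : ∀ t : ℝ,
      (((X + t • (X * P))ᵀ * M * (X + t • (X * P)) - 1)
        * ((X + t • (X * P))ᵀ * M * (X + t • (X * P)) - 1)).trace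
      = ((A - 1) * (A - 1)).trace + 4 * lam * (lam - 1) * t
        + (2 * lam * (lam - 1) + 4 * lam ^ 2) * t ^ 2 + 4 * lam ^ 2 * t ^ 3 + lam ^ 2 * t ^ 4 := by
    intro t
    rw [transpose_mul_mul_add_smul_mul_proj M X (transpose_vecMulVec v v) hPP hAP hPA,
      add_sub_right_comm, trace_mul_self_add_smul, htrBP, hPP, htrP]
    ring
  rw [funext quartic, iteratedDeriv_two_quartic_zero]
  ring

/-- For `c(X) = tr((XᵀMX − I)²)`, a unit eigenvector `v` of `(X*)ᵀMX*` with the smallest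
eigenvalue `λ`, and `D = X* v vᵀ`, the second derivative of `t ↦ c(X* + tD)` at `0`
equals `4λ(3λ − 1)`. -/
theorem stmt_11 {n p : ℕ} (M : Matrix (Fin n) (Fin n) ℝ) (hM : M.PosSemidef)
    (X : Matrix (Fin n) (Fin p) ℝ) (hHerm : (Xᵀ * M * X).IsHermitian)
    (v : Fin p → ℝ) (lam : ℝ)
    (hv : ∑ i, v i ^ 2 = 1)
    (heig : (Xᵀ * M * X) *ᵥ v = lam • v)
    (hmin : ∀ i, lam ≤ hHerm.eigenvalues i) :
    iteratedDeriv 2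
      (fun t : ℝ =>
        (((X + t • (X * vecMulVec v v))ᵀ * M * (X + t • (X * vecMulVec v v)) - 1)
          * ((X + t • (X * vecMulVec v v))ᵀ * M * (X + t • (X * vecMulVec v v)) - 1)).trace)
      0 = 4 * lam * (3 * lam - 1) :=
  stmt_11_general M X hHerm v lam hv heig
end
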